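/- Let F be an invertible IFS on a compact metric space X and let x ∉ R(F) (x not chain recurrent). Then there exists a Conley attractor A of F such that x ∉ A, x lies in the basin of A, and hence x ∉ A ∪ A*. -/

import Mathlib

open Set Filter Metric Topology

/-- The set map of an IFS: `F(S) = ⋃ i, fᵢ(S)`. -/
def IFSApply {ι X : Type*} (f : ι → X → X) (S : Set X) : Set X := ⋃ i, f i '' S

/-- `lim_{k→∞} F^k(closure U) = A` in the Hausdorff (extended) metric. -/
def ConleyLim {ι X : Type*} [MetricSpace X] (f : ι → X → X) (U A : Set X) : Prop :=
  Filter.Tendsto (fun k => EMetric.hausdorffEdist ((IFSApply f)^[k] (closure U)) A)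
    Filter.atTop (nhds 0)

/-- A compact set `A` is a Conley attractor of the IFS `f` if there is an open `U ⊇ A`
with `A = lim_{k→∞} F^k(closure U)`. -/
def IsConleyAttractor {ι X : Type*} [MetricSpace X] (f : ι → X → X) (A : Set X) : Prop :=
  IsCompact A ∧ ∃ U : Set X, IsOpen U ∧ A ⊆ U ∧ ConleyLim f U A

/-- The basin of a Conley attractor: the union of all open sets `U` as in the definition. -/
def conleyBasin {ι X : Type*} [MetricSpace X] (f : ι → X → X) (A : Set X) : Set X :=
  ⋃₀ {U : Set X | IsOpen U ∧ A ⊆ U ∧ ConleyLim f U A}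

/-- `lim_{k→∞} F^k(S) = A` in the Hausdorff (extended) metric. -/
def IFSLim {ι X : Type*} [MetricSpace X] (f : ι → X → X) (S A : Set X) : Prop :=
  Filter.Tendsto (fun k => EMetric.hausdorffEdist ((IFSApply f)^[k] S) A)
    Filter.atTop (nhds 0)

/-- `A` is a strict attractor of the IFS `f`. -/
def IsStrictAttractor {ι X : Type*} [MetricSpace X] (f : ι → X → X) (A : Set X) : Prop :=
  A.Nonempty ∧ IsCompact A ∧ IFSApply f A = A ∧
  ∃ U : Set X, IsOpen U ∧ A ⊆ U ∧
    ∀ S : Set X, S.Nonempty → IsCompact S → S ⊆ U → IFSLim f S A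

/-- The basin of a strict attractor: the largest open `U` with
`lim_{k→∞} F^k(S) = A` for all nonempty compact `S ⊆ U`. -/
def strictBasin {ι X : Type*} [MetricSpace X] (f : ι → X → X) (A : Set X) : Set X :=
  ⋃₀ {U : Set X | IsOpen U ∧
    ∀ S : Set X, S.Nonempty → IsCompact S → S ⊆ U → IFSLim f S A}

/-- `x` is chain recurrent for the IFS `f`: for every `ε > 0` there is an `ε`-chain
from `x` back to `x`. -/
def IsChainRecurrent {ι X : Type*} [MetricSpace X] (f : ι → X → X) (x : X) : Prop :=
  ∀ ε : ℝ, 0 < ε → ∃ n : ℕ, 0 < n ∧ ∃ c : ℕ → X, c 0 = x ∧ c n = x ∧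
    ∀ i < n, ∃ j : ι, dist (c (i + 1)) (f j (c i)) < ε

/-! If `x` is not chain recurrent, fix `ε` such that there is no `ε`-chain from `x` to itself, and
let `W` be a small thickening of the set of points `ε`-chain reachable from `x` (including `x`).
Uniform continuity of the maps makes `F(closure W)` consist of endpoints of `ε`-chains from `x`,
so `F(closure W) ⊆ W`. The iterates `F^k(closure W)` then decrease to a Conley attractor `A`
with `W` in its basin, and `A ⊆ F(closure W)` does not contain `x`. -/

open Relation

theorem Relation.TransGen.exists_seq {α : Type*} {r : α → α → Prop} {a b : α}
    (h : TransGen r a b) :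
    ∃ n, 0 < n ∧ ∃ c : ℕ → α, c 0 = a ∧ c n = b ∧ ∀ i < n, r (c i) (c (i + 1)) := by
  induction h using TransGen.head_induction_on with
  | @single a hab =>
    refine ⟨1, one_pos, fun | 0 => a | _ => b, rfl, rfl, fun i hi => ?_⟩
    obtain rfl := Nat.lt_one_iff.1 hi
    exact hab
  | @head a c hac _ ih =>
    obtain ⟨n, -, s, rfl, rfl, hs⟩ := ih
    refine ⟨n + 1, n.succ_pos, fun | 0 => a | i + 1 => s i, rfl, rfl, ?_⟩
    rintro (_ | i) hi
    · exact hac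
    · exact hs i (by omega)

theorem Metric.tendsto_hausdorffEDist_iInter_of_antitone {X : Type*} [EMetricSpace X]
    {K : ℕ → Set X} (hK : Antitone K) (hKc : ∀ n, IsCompact (K n)) :
    Tendsto (fun n => hausdorffEDist (K n) (⋂ m, K m)) atTop (𝓝 0) := by
  refine ENNReal.tendsto_nhds_zero.2 fun ε hε => ?_
  obtain ⟨N, hN⟩ := exists_subset_nhds_of_isCompact hK.directed_ge hKc
    (U := {y | infEDist y (⋂ m, K m) < ε}) fun y hy =>
      (isOpen_lt continuous_infEDist continuous_const).mem_nhds (by simpa [infEDist_zero_of_mem hy])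
  filter_upwards [eventually_ge_atTop N] with n hn
  refine hausdorffEDist_le_of_infEDist (fun y hy => (hN (hK hn hy)).le) fun y hy => ?_
  rw [infEDist_zero_of_mem (mem_iInter.1 hy n)]
  exact zero_le

section IFS

variable {ι X : Type*} (f : ι → X → X)

theorem monotone_IFSApply : Monotone (IFSApply f) :=
  fun _ _ h => iUnion_mono fun _ => image_mono h

variable {f}

theorem IsCompact.iterate_IFSApply [TopologicalSpace X] [Finite ι] (hf : ∀ i, Continuous (f i))
    {S : Set X} (hS : IsCompact S) (k : ℕ) : IsCompact ((IFSApply f)^[k] S) := by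
  induction k with
  | zero => exact hS
  | succ k ih =>
    rw [Function.iterate_succ_apply']
    exact isCompact_iUnion fun i => ih.image (hf i)

variable [MetricSpace X]

theorem exists_isConleyAttractor_subset_IFSApply [CompactSpace X] [Finite ι]
    (hf : ∀ i, Continuous (f i)) {U : Set X} (hU : IsOpen U) (hFU : IFSApply f (closure U) ⊆ U) :
    ∃ A, IsConleyAttractor f A ∧ A ⊆ IFSApply f (closure U) ∧ U ⊆ conleyBasin f A := by
  set K : ℕ → Set X := fun k => (IFSApply f)^[k] (closure U)
  have hK : Antitone K :=
    (monotone_IFSApply f).antitone_iterate_of_map_le (hFU.trans subset_closure)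
  have hKc : ∀ k, IsCompact (K k) := isClosed_closure.isCompact.iterate_IFSApply hf
  have hAK : ⋂ k, K k ⊆ IFSApply f (closure U) := iInter_subset K 1
  have hlim : ConleyLim f U (⋂ k, K k) := tendsto_hausdorffEDist_iInter_of_antitone hK hKc
  have hAc : IsCompact (⋂ k, K k) :=
    (hKc 0).of_isClosed_subset (isClosed_iInter fun k => (hKc k).isClosed) (iInter_subset K 0)
  exact ⟨⋂ k, K k, ⟨hAc, U, hU, hAK.trans hFU, hlim⟩, hAK,
    subset_sUnion_of_mem ⟨hU, hAK.trans hFU, hlim⟩⟩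

variable (f) in
/-- `TransGen (chainStep f ε) a b` says that there is an `ε`-chain from `a` to `b`. -/
def chainStep (ε : ℝ) (a b : X) : Prop := ∃ j, dist b (f j a) < ε

theorem isChainRecurrent_of_forall_transGen {x : X}
    (h : ∀ ε > 0, TransGen (chainStep f ε) x x) : IsChainRecurrent f x := fun ε hε => by
  obtain ⟨n, hn, c, hc0, hcn, hc⟩ := (h ε hε).exists_seq
  exact ⟨n, hn, c, hc0, hcn, hc⟩

theorem exists_IFSApply_closure_thickening_subset [CompactSpace X] [Finite ι]
    (hf : ∀ i, Continuous (f i)) {ε : ℝ} (hε : 0 < ε) :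
    ∃ δ > 0, ∀ S : Set X,
      IFSApply f (closure (thickening δ S)) ⊆ {y | ∃ z ∈ S, chainStep f ε z y} := by
  obtain ⟨δ, hδ, hfδ⟩ := Metric.uniformEquicontinuous_iff.1 (uniformEquicontinuous_finite.2
    fun i => CompactSpace.uniformContinuous_of_continuous (hf i)) ε hε
  refine ⟨δ / 2, half_pos hδ, fun S => iUnion_subset fun i => image_subset_iff.2 fun y hy => ?_⟩
  have hy' : y ∈ thickening δ S := ((closure_thickening_subset_cthickening _ _).trans
    (cthickening_subset_thickening' hδ (half_lt_self hδ) _)) hy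
  obtain ⟨z, hz, hyz⟩ := mem_thickening_iff.1 hy'
  exact ⟨z, hz, i, hfδ y z hyz i⟩

end IFS

theorem not_chain_recurrent_separating_attractor_general {ι X : Type*} [MetricSpace X]
    [CompactSpace X] [Fintype ι] (f : ι → X ≃ₜ X)
    (x : X) (hx : ¬ IsChainRecurrent (fun i => (f i : X → X)) x) :
    ∃ A : Set X, IsConleyAttractor (fun i => (f i : X → X)) A ∧ x ∉ A ∧
      x ∈ conleyBasin (fun i => (f i : X → X)) A ∧
      x ∉ A ∪ (conleyBasin (fun i => (f i : X → X)) A)ᶜ := by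
  set g : ι → X → X := fun i => f i
  have hg : ∀ i, Continuous (g i) := fun i => (f i).continuous
  obtain ⟨ε, hε, hxx⟩ : ∃ ε > 0, ¬ TransGen (chainStep g ε) x x := by
    simpa using mt isChainRecurrent_of_forall_transGen hx
  obtain ⟨δ, hδ, htrap⟩ := exists_IFSApply_closure_thickening_subset hg hε
  set R : Set X := {y | ReflTransGen (chainStep g ε) x y}
  have hreach : IFSApply g (closure (thickening δ R)) ⊆ {y | TransGen (chainStep g ε) x y} :=
    (htrap R).trans fun y ⟨z, hz, hzy⟩ => TransGen.tail' hz hzy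
  have hW : IFSApply g (closure (thickening δ R)) ⊆ thickening δ R :=
    hreach.trans fun y hy => self_subset_thickening hδ R hy.to_reflTransGen
  have hxW : x ∈ thickening δ R := self_subset_thickening hδ R ReflTransGen.refl
  obtain ⟨A, hA, hAW, hbasin⟩ := exists_isConleyAttractor_subset_IFSApply hg isOpen_thickening hW
  have hxA : x ∉ A := fun h => hxx (hreach (hAW h))
  exact ⟨A, hA, hxA, hbasin hxW, by simp [hxA, hbasin hxW]⟩

theorem not_chain_recurrent_separating_attractor {ι X : Type*} [MetricSpace X]
    [CompactSpace X] [Fintype ι] [Nonempty ι] (f : ι → X ≃ₜ X)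
    (x : X) (hx : ¬ IsChainRecurrent (fun i => (f i : X → X)) x) :
    ∃ A : Set X, IsConleyAttractor (fun i => (f i : X → X)) A ∧ x ∉ A ∧
      x ∈ conleyBasin (fun i => (f i : X → X)) A ∧
      x ∉ A ∪ (conleyBasin (fun i => (f i : X → X)) A)ᶜ :=
  not_chain_recurrent_separating_attractor_general f x hx
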